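/- arXiv:2502.02953 — 5 statements merged into one kernel-verified Lean document; each statement's English description precedes it below -/
import Mathlib

section
/- Fix L > 0 and r > 0, and let x, x' ∈ ℝⁿ satisfy |x_i| ≥ Lr and x_i ≠ 0 for all i, and |x'_i| ≥ Lr and x'_i ≠ 0 for all i. Then for all u, u' ∈ ℝ^m and all γ, γ' ∈ ℝ: (uᵀu' − ‖u‖‖u'‖)·(‖x − rZ(x)‖‖x' − rZ(x')‖ − (x − rZ(x))ᵀ(x' − rZ(x'))) + (γγ'·uᵀu' − |γγ'|·‖u‖‖u'‖)·(‖Z(x)‖‖Z(x')‖ − Z(x)ᵀZ(x')) + (γ'·uᵀu' − |γ'|·‖u‖‖u'‖)·((x − rZ(x))ᵀZ(x) − (x − rZ(x))ᵀZ(x')) + (γ·uᵀu' − |γ|·‖u‖‖u'‖)·((x' − rZ(x'))ᵀZ(x') − (x' − rZ(x'))ᵀZ(x)) ≤ 0. -/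
open Real

/-- One-bit quantization `Z(v) = L · sign(v)` applied entrywise. -/
noncomputable def Zv {n : ℕ} (L : ℝ) (x : Fin n → ℝ) : Fin n → ℝ :=
  fun i => L * Real.sign (x i)

/-- Euclidean dot product. -/
noncomputable def dotp {k : ℕ} (a b : Fin k → ℝ) : ℝ := ∑ i, a i * b i

/-- Euclidean norm. -/
noncomputable def nrm {k : ℕ} (a : Fin k → ℝ) : ℝ := Real.sqrt (∑ i, (a i) ^ 2)

/-- `x − r Z(x)`. -/
noncomputable def xr {n : ℕ} (L r : ℝ) (x : Fin n → ℝ) : Fin n → ℝ :=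
  fun i => x i - r * (L * Real.sign (x i))

/-! Every coefficient `c · uᵀu' − |c| · ‖u‖‖u'‖` is nonpositive by Cauchy–Schwarz, and every factor
it multiplies is nonnegative: the first two by Cauchy–Schwarz, the last two because
`x − rZ(x)` has the sign pattern of `Z(x)` once `|xᵢ| ≥ Lr`, so among the vectors
`L · s` with `|sᵢ| ≤ 1` its inner product is maximised by `Z(x)`. -/

lemma dotp_le_nrm_mul_nrm {k : ℕ} (a b : Fin k → ℝ) : dotp a b ≤ nrm a * nrm b :=
  Real.sum_mul_le_sqrt_mul_sqrt _ a b

lemma nrm_neg {k : ℕ} (a : Fin k → ℝ) : nrm (-a) = nrm a := by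
  simp [nrm]

lemma abs_dotp_le_nrm_mul_nrm {k : ℕ} (a b : Fin k → ℝ) : |dotp a b| ≤ nrm a * nrm b := by
  refine abs_le.mpr ⟨?_, dotp_le_nrm_mul_nrm a b⟩
  have h := dotp_le_nrm_mul_nrm (-a) b
  simp only [dotp, nrm_neg, Pi.neg_apply, neg_mul, Finset.sum_neg_distrib] at h
  exact neg_le.mpr h

lemma mul_dotp_le_abs_mul_nrm_mul_nrm {k : ℕ} (c : ℝ) (a b : Fin k → ℝ) :
    c * dotp a b ≤ |c| * nrm a * nrm b :=
  calc c * dotp a b ≤ |c| * |dotp a b| := by rw [← abs_mul]; exact le_abs_self _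
    _ ≤ |c| * (nrm a * nrm b) := by gcongr; exact abs_dotp_le_nrm_mul_nrm a b
    _ = |c| * nrm a * nrm b := by ring

lemma sub_mul_sign_mul_le {c t s : ℝ} (hc : c ≤ |t|) (hs : |s| ≤ 1) :
    (t - c * sign t) * s ≤ (t - c * sign t) * sign t := by
  obtain ⟨hs₁, hs₂⟩ := abs_le.mp hs
  rcases lt_trichotomy t 0 with ht | rfl | ht
  · rw [abs_of_neg ht] at hc
    rw [sign_of_neg ht]
    nlinarith
  · simp
  · rw [abs_of_pos ht] at hc
    rw [sign_of_pos ht]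
    nlinarith

lemma abs_sign_le_one (t : ℝ) : |sign t| ≤ 1 := by
  rcases sign_apply_eq t with h | h | h <;> norm_num [h]

lemma dotp_xr_Zv_le {n : ℕ} {L r : ℝ} (hL : 0 ≤ L) {x : Fin n → ℝ} (hx : ∀ i, L * r ≤ |x i|)
    (y : Fin n → ℝ) : dotp (xr L r x) (Zv L y) ≤ dotp (xr L r x) (Zv L x) := by
  refine Finset.sum_le_sum fun i _ => ?_
  have h := mul_le_mul_of_nonneg_left (sub_mul_sign_mul_le (hx i) (abs_sign_le_one (y i))) hL
  simp only [xr, Zv]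
  linear_combination h

theorem stmt10_general (n m : ℕ) (L r : ℝ) (hL : 0 < L)
    (x x' : Fin n → ℝ)
    (hx : ∀ i, L * r ≤ |x i| ∧ x i ≠ 0)
    (hx' : ∀ i, L * r ≤ |x' i| ∧ x' i ≠ 0)
    (u u' : Fin m → ℝ) (γ γ' : ℝ) :
    (dotp u u' - nrm u * nrm u') *
        (nrm (xr L r x) * nrm (xr L r x') - dotp (xr L r x) (xr L r x')) +
      (γ * γ' * dotp u u' - |γ * γ'| * nrm u * nrm u') *
        (nrm (Zv L x) * nrm (Zv L x') - dotp (Zv L x) (Zv L x')) +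
      (γ' * dotp u u' - |γ'| * nrm u * nrm u') *
        (dotp (xr L r x) (Zv L x) - dotp (xr L r x) (Zv L x')) +
      (γ * dotp u u' - |γ| * nrm u * nrm u') *
        (dotp (xr L r x') (Zv L x') - dotp (xr L r x') (Zv L x)) ≤ 0 := by
  have coeff (c : ℝ) : c * dotp u u' - |c| * nrm u * nrm u' ≤ 0 :=
    sub_nonpos.mpr (mul_dotp_le_abs_mul_nrm_mul_nrm c u u')
  have gap (a b : Fin n → ℝ) : 0 ≤ nrm a * nrm b - dotp a b :=
    sub_nonneg.mpr (dotp_le_nrm_mul_nrm a b)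
  have hxZ := sub_nonneg.mpr (dotp_xr_Zv_le hL.le (fun i => (hx i).1) x')
  have hx'Z := sub_nonneg.mpr (dotp_xr_Zv_le hL.le (fun i => (hx' i).1) x)
  have h₁ := mul_nonpos_of_nonpos_of_nonneg (coeff 1) (gap (xr L r x) (xr L r x'))
  have h₂ := mul_nonpos_of_nonpos_of_nonneg (coeff (γ * γ')) (gap (Zv L x) (Zv L x'))
  have h₃ := mul_nonpos_of_nonpos_of_nonneg (coeff γ') hxZ
  have h₄ := mul_nonpos_of_nonpos_of_nonneg (coeff γ) hx'Z
  simp only [one_mul, abs_one] at h₁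
  linarith

/-- the covariance-gap inequality underlying the discrete-set Gaussian
min-max comparison theorem. -/
theorem stmt10 (n m : ℕ) (L r : ℝ) (hL : 0 < L) (hr : 0 < r)
    (x x' : Fin n → ℝ)
    (hx : ∀ i, L * r ≤ |x i| ∧ x i ≠ 0)
    (hx' : ∀ i, L * r ≤ |x' i| ∧ x' i ≠ 0)
    (u u' : Fin m → ℝ) (γ γ' : ℝ) :
    (dotp u u' - nrm u * nrm u') *
        (nrm (xr L r x) * nrm (xr L r x') - dotp (xr L r x) (xr L r x')) +
      (γ * γ' * dotp u u' - |γ * γ'| * nrm u * nrm u') *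
        (nrm (Zv L x) * nrm (Zv L x') - dotp (Zv L x) (Zv L x')) +
      (γ' * dotp u u' - |γ'| * nrm u * nrm u') *
        (dotp (xr L r x) (Zv L x) - dotp (xr L r x) (Zv L x')) +
      (γ * dotp u u' - |γ| * nrm u * nrm u') *
        (dotp (xr L r x') (Zv L x') - dotp (xr L r x') (Zv L x)) ≤ 0 :=
  stmt10_general n m L r hL x x' hx hx' u u' γ γ'
end

section
/- For any vectors a, b ∈ ℝⁿ there exists a sign sequence σ ∈ {−1, +1}ⁿ such that max( Σ_{i=1}^n σ_i a_i , Σ_{i=1}^n σ_i b_i ) ≤ 2·log 2 · max(‖a‖₂, ‖b‖₂). -/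
/-!
The bound `2 log 2 ≥ 1` leaves room for an elementary argument. Choosing the signs greedily, one
at a time so that each new term does not increase `(∑ σᵢ cᵢ)²` beyond `∑ cᵢ²`, balances
`c = a - b`, so `|∑ σᵢ aᵢ - ∑ σᵢ bᵢ| ≤ ‖a - b‖₂ ≤ 2M` with `M = max(‖a‖₂, ‖b‖₂)`. Flipping all signs if necessary makes
`∑ σᵢ aᵢ + ∑ σᵢ bᵢ ≤ 0`, and then both sums are at most `M`.
-/

open Real Finset

lemma exists_sign_sq_add_mul_le (S t : ℝ) :
    ∃ s : ℝ, (s = 1 ∨ s = -1) ∧ (S + s * t) ^ 2 ≤ S ^ 2 + t ^ 2 := by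
  by_cases h : 0 ≤ S * t
  · exact ⟨-1, Or.inr rfl, by nlinarith⟩
  · exact ⟨1, Or.inl rfl, by nlinarith⟩

lemma exists_signs_sq_sum_mul_le {ι : Type*} [DecidableEq ι] (s : Finset ι) (c : ι → ℝ) :
    ∃ σ : ι → ℝ, (∀ i, σ i = 1 ∨ σ i = -1) ∧
      (∑ i ∈ s, σ i * c i) ^ 2 ≤ ∑ i ∈ s, c i ^ 2 := by
  induction s using Finset.induction_on with
  | empty => exact ⟨fun _ => 1, fun _ => Or.inl rfl, by simp⟩
  | insert j s hj ih =>
    obtain ⟨σ, hσ, hsq⟩ := ih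
    obtain ⟨e, he, hstep⟩ := exists_sign_sq_add_mul_le (∑ i ∈ s, σ i * c i) (c j)
    refine ⟨Function.update σ j e, fun i => ?_, ?_⟩
    · rcases eq_or_ne i j with rfl | hij
      · simpa using he
      · simpa [Function.update_of_ne hij] using hσ i
    · have hsum : ∑ i ∈ s, Function.update σ j e i * c i = ∑ i ∈ s, σ i * c i :=
        sum_congr rfl fun i hi => by rw [Function.update_of_ne (ne_of_mem_of_not_mem hi hj)]
      rw [sum_insert hj, sum_insert hj, hsum, Function.update_self, add_comm (e * c j)]
      linarith

lemma exists_sign_max_mul_le {x y M : ℝ} (h : |x - y| ≤ 2 * M) :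
    ∃ ε : ℝ, (ε = 1 ∨ ε = -1) ∧ max (ε * x) (ε * y) ≤ M := by
  obtain ⟨h₁, h₂⟩ := abs_le.mp h
  by_cases hxy : x + y ≤ 0
  · exact ⟨1, Or.inl rfl, max_le (by linarith) (by linarith)⟩
  · exact ⟨-1, Or.inr rfl, max_le (by linarith) (by linarith)⟩

lemma sqrt_sum_sq_eq_norm {ι : Type*} [Fintype ι] (a : ι → ℝ) :
    √(∑ i, a i ^ 2) = ‖WithLp.toLp 2 a‖ := by
  simp [EuclideanSpace.norm_eq]

/-- Rademacher-sequence selection via the finite class lemma applied to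
`{a, b}`: there is a sign sequence `σ` such that
`max(Σ σᵢ aᵢ, Σ σᵢ bᵢ) ≤ 2 log 2 · max(‖a‖₂, ‖b‖₂)`. -/
theorem stmt13 (n : ℕ) (a b : Fin n → ℝ) :
    ∃ σ : Fin n → ℝ, (∀ i, σ i = 1 ∨ σ i = -1) ∧
      max (∑ i, σ i * a i) (∑ i, σ i * b i) ≤
        2 * Real.log 2 *
          max (Real.sqrt (∑ i, (a i) ^ 2)) (Real.sqrt (∑ i, (b i) ^ 2)) := by
  set M := max (√(∑ i, a i ^ 2)) (√(∑ i, b i ^ 2))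
  obtain ⟨σ, hσ, hsq⟩ := exists_signs_sq_sum_mul_le univ (a - b)
  have hbalanced : |∑ i, σ i * a i - ∑ i, σ i * b i| ≤ 2 * M :=
    calc |∑ i, σ i * a i - ∑ i, σ i * b i| = |∑ i, σ i * (a - b) i| := by
          simp [mul_sub, sum_sub_distrib]
      _ ≤ √(∑ i, (a - b) i ^ 2) := Real.abs_le_sqrt hsq
      _ = ‖WithLp.toLp 2 a - WithLp.toLp 2 b‖ := by rw [sqrt_sum_sq_eq_norm, WithLp.toLp_sub]
      _ ≤ ‖WithLp.toLp 2 a‖ + ‖WithLp.toLp 2 b‖ := norm_sub_le _ _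
      _ ≤ 2 * M := by
          rw [← sqrt_sum_sq_eq_norm, ← sqrt_sum_sq_eq_norm, two_mul]
          exact add_le_add (le_max_left _ _) (le_max_right _ _)
  obtain ⟨ε, hε, hmax⟩ := exists_sign_max_mul_le hbalanced
  refine ⟨fun i => ε * σ i, fun i => ?_, ?_⟩
  · rcases hε with rfl | rfl <;> rcases hσ i with h | h <;> simp [h]
  · have hM : 0 ≤ M := (Real.sqrt_nonneg _).trans (le_max_left _ _)
    have hlog : 1 ≤ 2 * Real.log 2 := by linarith [Real.log_two_gt_d9]
    simp only [mul_assoc ε, ← mul_sum]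
    exact hmax.trans (le_mul_of_one_le_left hM hlog)
end

section
/- Fix L > 0, A > 0 and a, b > 0. For any C₁, C₂ > 0 there exist C_y > 0 and ε₀ > 0, depending only on (L, A, a, b, C₁, C₂), such that for all ε ∈ (0, ε₀), all n, and all y ∈ ℝⁿ satisfying ‖y‖∞ ≤ A, |y_i| > Lε² for all i, |(1/√n)‖y‖₂ − √b| ≤ C₁·ε³ and |(1/n)‖y‖₁ − a| ≤ C₂·ε³, one has | ρ_{ε²}(y) − (a − ε²L)/√(b − 2ε²La) | ≤ C_y·ε³. -/
/-
For `y` without zero entries, `Z(y)` has constant modulus `L`, so `ρ_r(y)` depends on `y` only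
through its empirical moments `m = ‖y‖₁ / n` and `u = ‖y‖₂ / √n`:
`ρ_r(y) = (m − rL) / √(u² − 2rLm + r²L²)`.
With `r = ε²`, replacing `(u, m)` by `(√b, a)` changes numerator and radicand by `O(ε³)`, and the
radicand stays above `b / 2` for small `ε`; since `N / √D` is Lipschitz on `D ≥ c > 0`, the claim
follows.
-/

open Real

/-- `ρ_r(y) = (y − rZ(y))ᵀ Z(y) / (‖y − rZ(y)‖ ‖Z(y)‖)`. -/
noncomputable def rhoR {n : ℕ} (L r : ℝ) (y : Fin n → ℝ) : ℝ :=
  dotp (xr L r y) (Zv L y) / (nrm (xr L r y) * nrm (Zv L y))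

open Finset

theorem Real.mul_sign_eq_abs (t : ℝ) : t * Real.sign t = |t| := by
  rcases lt_trichotomy t 0 with h | rfl | h
  · rw [Real.sign_of_neg h, abs_of_neg h, mul_neg_one]
  · simp
  · rw [Real.sign_of_pos h, abs_of_pos h, mul_one]

theorem Real.sign_sq_of_ne_zero {t : ℝ} (ht : t ≠ 0) : Real.sign t ^ 2 = 1 := by
  rcases Real.sign_apply_eq_of_ne_zero t ht with h | h <;> rw [h] <;> norm_num

theorem abs_sq_sub_sq_le (x y : ℝ) : |x ^ 2 - y ^ 2| ≤ |x - y| * (|x - y| + 2 * |y|) := by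
  rw [show x ^ 2 - y ^ 2 = (x - y) * (x - y + 2 * y) by ring, abs_mul]
  gcongr
  exact (abs_add_le _ _).trans_eq (by rw [abs_mul, abs_two])

theorem abs_sqrt_sub_sqrt_le {c x y : ℝ} (hc : 0 < c) (hx : c ≤ x) (hy : c ≤ y) :
    |√x - √y| ≤ |x - y| / (2 * √c) := by
  have hsx : √c ≤ √x := sqrt_le_sqrt hx
  have hsy : √c ≤ √y := sqrt_le_sqrt hy
  have hsc : 0 < √c := sqrt_pos.mpr hc
  have hfactor : x - y = (√x - √y) * (√x + √y) := by
    linear_combination sq_sqrt (hc.le.trans hy) - sq_sqrt (hc.le.trans hx)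
  rw [le_div_iff₀ (by positivity), hfactor, abs_mul, abs_of_pos (by linarith : 0 < √x + √y)]
  gcongr
  linarith

theorem abs_div_sqrt_sub_div_sqrt_le {c D D₀ : ℝ} (N N₀ : ℝ) (hc : 0 < c) (hD : c ≤ D)
    (hD₀ : c ≤ D₀) :
    |N / √D - N₀ / √D₀| ≤ |N - N₀| / √c + |N₀| * |D - D₀| / (2 * c * √c) := by
  have hsc : 0 < √c := sqrt_pos.mpr hc
  have hd : √c ≤ √D := sqrt_le_sqrt hD
  have hd₀ : √c ≤ √D₀ := sqrt_le_sqrt hD₀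
  have hdd₀ : c ≤ √D * √D₀ := by
    calc c = √c * √c := (mul_self_sqrt hc.le).symm
      _ ≤ √D * √D₀ := mul_le_mul hd hd₀ hsc.le (hsc.le.trans hd)
  have hsplit : N / √D - N₀ / √D₀ = (N - N₀) / √D + N₀ * (√D₀ - √D) / (√D * √D₀) := by
    have : √D ≠ 0 := (hsc.trans_le hd).ne'
    have : √D₀ ≠ 0 := (hsc.trans_le hd₀).ne'
    field_simp
    ring
  have hfirst : |(N - N₀) / √D| ≤ |N - N₀| / √c := by
    rw [abs_div, abs_of_pos (hsc.trans_le hd)]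
    gcongr
  have hsecond : |N₀ * (√D₀ - √D) / (√D * √D₀)| ≤ |N₀| * |D - D₀| / (2 * c * √c) := by
    rw [abs_div, abs_mul, abs_of_pos (hc.trans_le hdd₀)]
    calc |N₀| * |√D₀ - √D| / (√D * √D₀) ≤ |N₀| * (|D - D₀| / (2 * √c)) / c := by
          gcongr
          rw [abs_sub_comm D]
          exact abs_sqrt_sub_sqrt_le hc hD₀ hD
      _ = |N₀| * |D - D₀| / (2 * c * √c) := by ring
  rw [hsplit]
  exact (abs_add_le _ _).trans (add_le_add hfirst hsecond)

theorem nrm_sq {k : ℕ} (v : Fin k → ℝ) : nrm v ^ 2 = ∑ i, v i ^ 2 :=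
  sq_sqrt (sum_nonneg fun _ _ => sq_nonneg _)

section Quantization

variable {n : ℕ} {L : ℝ} (r : ℝ) {y : Fin n → ℝ}

theorem dotp_xr_Zv (hy : ∀ i, y i ≠ 0) :
    dotp (xr L r y) (Zv L y) = L * ∑ i, |y i| - n * r * L ^ 2 := by
  have hterm : ∀ i, (y i - r * (L * Real.sign (y i))) * (L * Real.sign (y i)) =
      L * |y i| - r * L ^ 2 := fun i => by
    rw [← Real.mul_sign_eq_abs]
    linear_combination (-r * L ^ 2) * Real.sign_sq_of_ne_zero (hy i)
  simp only [dotp, xr, Zv, hterm, sum_sub_distrib, ← mul_sum, sum_const, card_univ,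
    Fintype.card_fin, nsmul_eq_mul]
  ring

theorem nrm_Zv (hL : 0 ≤ L) (hy : ∀ i, y i ≠ 0) : nrm (Zv L y) = L * √n := by
  have hterm : ∀ i, Zv L y i ^ 2 = L ^ 2 := fun i => by
    rw [Zv, mul_pow, Real.sign_sq_of_ne_zero (hy i), mul_one]
  rw [nrm, Finset.sum_congr rfl fun i _ => hterm i, sum_const, card_univ, Fintype.card_fin,
    nsmul_eq_mul, sqrt_mul (Nat.cast_nonneg n), sqrt_sq hL, mul_comm]

theorem nrm_xr_sq (hy : ∀ i, y i ≠ 0) :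
    nrm (xr L r y) ^ 2 = nrm y ^ 2 - 2 * r * L * ∑ i, |y i| + n * r ^ 2 * L ^ 2 := by
  have hterm : ∀ i, xr L r y i ^ 2 = y i ^ 2 - 2 * r * L * |y i| + r ^ 2 * L ^ 2 := fun i => by
    rw [xr, ← Real.mul_sign_eq_abs]
    linear_combination (r ^ 2 * L ^ 2) * Real.sign_sq_of_ne_zero (hy i)
  simp only [nrm_sq, hterm, sum_add_distrib, sum_sub_distrib, ← mul_sum, sum_const, card_univ,
    Fintype.card_fin, nsmul_eq_mul]
  ring

theorem rhoR_eq_moments (hL : 0 < L) (hn : n ≠ 0) (hy : ∀ i, y i ≠ 0) :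
    rhoR L r y = ((∑ i, |y i|) / n - r * L) /
      √((nrm y / √n) ^ 2 - 2 * r * L * ((∑ i, |y i|) / n) + r ^ 2 * L ^ 2) := by
  have hn' : (0 : ℝ) < n := by positivity
  have hxr : nrm (xr L r y) =
      √n * √((nrm y / √n) ^ 2 - 2 * r * L * ((∑ i, |y i|) / n) + r ^ 2 * L ^ 2) := by
    rw [← sqrt_mul hn'.le, ← sqrt_sq (show 0 ≤ nrm (xr L r y) from sqrt_nonneg _), nrm_xr_sq r hy,
      div_pow, sq_sqrt hn'.le]
    congr 1
    field_simp
  rw [rhoR, dotp_xr_Zv r hy, nrm_Zv hL.le hy, hxr]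
  set q := √((nrm y / √n) ^ 2 - 2 * r * L * ((∑ i, |y i|) / n) + r ^ 2 * L ^ 2)
  have hnum : L * ∑ i, |y i| - n * r * L ^ 2 = n * L * ((∑ i, |y i|) / n - r * L) := by
    field_simp
  rw [show √(n : ℝ) * q * (L * √n) = n * L * q by
      linear_combination (L * q) * mul_self_sqrt hn'.le,
    ← div_div, hnum, mul_div_cancel_left₀ _ (by positivity)]

end Quantization

theorem abs_sub_radicand_le {L a b C₁ C₂ ε u m : ℝ} (hL : 0 ≤ L) (hb : 0 ≤ b) (hC₁ : 0 ≤ C₁)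
    (hε : 0 ≤ ε) (hε1 : ε ≤ 1)
    (hu : |u - √b| ≤ C₁ * ε ^ 3) (hm : |m - a| ≤ C₂ * ε ^ 3) :
    |(u ^ 2 - 2 * ε ^ 2 * L * m + (ε ^ 2) ^ 2 * L ^ 2) - (b - 2 * ε ^ 2 * L * a)| ≤
      (C₁ * (C₁ + 2 * √b) + 2 * L * C₂ + L ^ 2) * ε ^ 3 := by
  have hε2 : ε ^ 2 ≤ 1 := pow_le_one₀ hε hε1
  have hε3 : ε ^ 3 ≤ 1 := pow_le_one₀ hε hε1
  have hsq : |u ^ 2 - b| ≤ C₁ * (C₁ + 2 * √b) * ε ^ 3 := by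
    calc |u ^ 2 - b| = |u ^ 2 - √b ^ 2| := by rw [sq_sqrt hb]
      _ ≤ |u - √b| * (|u - √b| + 2 * |√b|) := abs_sq_sub_sq_le u √b
      _ ≤ C₁ * ε ^ 3 * (C₁ * ε ^ 3 + 2 * √b) := by
        rw [abs_of_nonneg (sqrt_nonneg b)]; gcongr
      _ ≤ C₁ * ε ^ 3 * (C₁ + 2 * √b) := by gcongr; exact mul_le_of_le_one_right hC₁ hε3
      _ = C₁ * (C₁ + 2 * √b) * ε ^ 3 := by ring
  have hcross : |2 * ε ^ 2 * L * (m - a)| ≤ 2 * L * C₂ * ε ^ 3 := by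
    rw [abs_mul, abs_of_nonneg (by positivity)]
    calc 2 * ε ^ 2 * L * |m - a| ≤ 2 * 1 * L * (C₂ * ε ^ 3) := by gcongr
      _ = 2 * L * C₂ * ε ^ 3 := by ring
  have hquartic : (ε ^ 2) ^ 2 * L ^ 2 ≤ L ^ 2 * ε ^ 3 := by
    rw [← pow_mul, mul_comm]
    exact mul_le_mul_of_nonneg_left (pow_le_pow_of_le_one hε hε1 (by norm_num)) (sq_nonneg L)
  rw [show (u ^ 2 - 2 * ε ^ 2 * L * m + (ε ^ 2) ^ 2 * L ^ 2) - (b - 2 * ε ^ 2 * L * a) =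
    (u ^ 2 - b) - 2 * ε ^ 2 * L * (m - a) + (ε ^ 2) ^ 2 * L ^ 2 by ring]
  calc _ ≤ |u ^ 2 - b| + |2 * ε ^ 2 * L * (m - a)| + |(ε ^ 2) ^ 2 * L ^ 2| :=
        (abs_add_le _ _).trans (by gcongr; exact abs_sub _ _)
    _ ≤ _ := by rw [abs_of_nonneg (by positivity : (0 : ℝ) ≤ (ε ^ 2) ^ 2 * L ^ 2)]; linarith

theorem stmt15_general (L A a b : ℝ) (hL : 0 < L) (ha : 0 < a) (hb : 0 < b) :
    ∀ C₁ C₂ : ℝ, 0 < C₁ → 0 < C₂ →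
      ∃ Cy ε₀ : ℝ, 0 < Cy ∧ 0 < ε₀ ∧
        ∀ ε : ℝ, 0 < ε → ε < ε₀ →
          ∀ (n : ℕ) (y : Fin n → ℝ),
            (∀ i, |y i| ≤ A) →
            (∀ i, L * ε ^ 2 < |y i|) →
            |nrm y / Real.sqrt n - Real.sqrt b| ≤ C₁ * ε ^ 3 →
            |(∑ i, |y i|) / n - a| ≤ C₂ * ε ^ 3 →
            |rhoR L (ε ^ 2) y - (a - ε ^ 2 * L) / Real.sqrt (b - 2 * ε ^ 2 * L * a)| ≤
              Cy * ε ^ 3 := by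
  intro C₁ C₂ hC₁ hC₂
  set K := C₁ * (C₁ + 2 * √b) + 2 * L * C₂ + L ^ 2
  -- `ε₀` keeps both radicands above `b / 2` and, through `hm`, rules out `n = 0`.
  refine ⟨C₂ / √(b / 2) + (a + L) * K / (2 * (b / 2) * √(b / 2)),
    min 1 (min (b / (2 * (K + 2 * L * a))) (a / C₂)), by positivity, by positivity, ?_⟩
  intro ε hε hε₀ n y _ hy hu hm
  obtain ⟨hε1, hεb, hεa⟩ : ε < 1 ∧ ε < b / (2 * (K + 2 * L * a)) ∧ ε < a / C₂ := by
    simpa only [lt_min_iff] using hε₀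
  rw [lt_div_iff₀ (by positivity)] at hεb
  rw [lt_div_iff₀' hC₂] at hεa
  have hε2 : ε ^ 2 ≤ ε := pow_le_of_le_one hε.le hε1.le two_ne_zero
  have hε3 : ε ^ 3 ≤ ε := pow_le_of_le_one hε.le hε1.le three_ne_zero
  have hn : n ≠ 0 := by
    rintro rfl
    simp only [univ_eq_empty, sum_empty, CharP.cast_eq_zero, div_zero, zero_sub, abs_neg,
      abs_of_pos ha] at hm
    nlinarith
  have hy0 : ∀ i, y i ≠ 0 := fun i h => (hy i).not_ge (by rw [h, abs_zero]; positivity)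
  have hrad := abs_sub_radicand_le hL.le hb.le hC₁.le hε.le hε1.le hu hm
  have hK : 0 ≤ K := by positivity
  have hcross := mul_le_mul_of_nonneg_left hε2 (by positivity : 0 ≤ 2 * L * a)
  have hD₀ : b / 2 ≤ b - 2 * ε ^ 2 * L * a := by nlinarith
  have hD : b / 2 ≤
      (nrm y / √n) ^ 2 - 2 * ε ^ 2 * L * ((∑ i, |y i|) / n) + (ε ^ 2) ^ 2 * L ^ 2 := by
    nlinarith [(abs_le.mp hrad).1, mul_le_mul_of_nonneg_left hε3 hK]
  have hN₀ : |a - ε ^ 2 * L| ≤ a + L := abs_le.mpr ⟨by nlinarith, by nlinarith⟩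
  rw [rhoR_eq_moments _ hL hn hy0]
  calc _ ≤ _ := abs_div_sqrt_sub_div_sqrt_le _ _ (by positivity) hD hD₀
    _ ≤ C₂ * ε ^ 3 / √(b / 2) + (a + L) * (K * ε ^ 3) / (2 * (b / 2) * √(b / 2)) := by
      rw [sub_sub_sub_cancel_right]
      gcongr
    _ = _ := by ring

/-- quantitative closeness of `ρ_{ε²}(y)` to `θ^ε = (a − ε²L)/√(b − 2ε²La)`
for vectors `y` with concentrated `ℓ₁` and `ℓ₂` norms and no small entries. -/
theorem stmt15 (L A a b : ℝ) (hL : 0 < L) (hA : 0 < A) (ha : 0 < a) (hb : 0 < b) :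
    ∀ C₁ C₂ : ℝ, 0 < C₁ → 0 < C₂ →
      ∃ Cy ε₀ : ℝ, 0 < Cy ∧ 0 < ε₀ ∧
        ∀ ε : ℝ, 0 < ε → ε < ε₀ →
          ∀ (n : ℕ) (y : Fin n → ℝ),
            (∀ i, |y i| ≤ A) →
            (∀ i, L * ε ^ 2 < |y i|) →
            |nrm y / Real.sqrt n - Real.sqrt b| ≤ C₁ * ε ^ 3 →
            |(∑ i, |y i|) / n - a| ≤ C₂ * ε ^ 3 →
            |rhoR L (ε ^ 2) y - (a - ε ^ 2 * L) / Real.sqrt (b - 2 * ε ^ 2 * L * a)| ≤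
              Cy * ε ^ 3 :=
  stmt15_general L A a b hL ha hb
end

section
/- Fix A > 0, L > 0, C₀ ∈ (0,1), C_y > 0, and a, b > 0 with a² < b; define θ^ε = (a − ε²L)/√(b − 2ε²La) and the intervals I₁ = (−4A/5, −3A/5), I₂ = (−2A/5, −A/5), I₃ = (A/5, 2A/5), I₄ = (3A/5, 4A/5). There exist ε₀ > 0 and Ĉ_y > 0, depending only on (A, L, C₀, C_y, a, b), such that for all ε ∈ (0, ε₀), all n, all θ₁, θ₂ ∈ (θ^ε − C_y·ε³, θ^ε + C_y·ε³), and every y₁ ∈ ℝⁿ with ‖y₁‖∞ ≤ A, with no entry in (−Lε², Lε²), with ρ_{ε²}(y₁) = θ₁, and with at least C₀·n entries in each interval I_k for k = 1, 2, 3, 4, there exists y₂ ∈ ℝⁿ with ‖y₂‖∞ ≤ A satisfying: (i) ρ_{ε²}(y₂) = θ₂; (ii) sign(y₂) = sign(y₁) entrywise; (iii) ‖y₂‖₁ = ‖y₁‖₁; (iv) (1/√n)‖y₂ − y₁‖₂ ≤ Ĉ_y·|θ₁ − θ₂|; (v) every entry of y₁ lying in (−A/10, A/10) is left unchanged in y₂.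 -/
/-!
When no entry of `y` vanishes, `ρ_r(y) = S / (√n · √Q)` with `s_i = |y_i| - rL`, `S = ∑ s_i` and
`Q = ∑ s_i²`. A sign-preserving change of `y` that keeps `‖y‖₁`, hence `S`, therefore reaches
`ρ_r = θ₂` exactly when it moves `Q` to `S² / (n θ₂²)`. Adding `t` to `m ≥ C₀ n` entries in
`(3A/5, 4A/5)` and subtracting `t` from as many entries in `(A/5, 2A/5)` keeps the signs, `‖y‖₁`
and all entries below `A/5`, and changes `Q` by `2Dt + 2mt²` with `D ≥ mA/5`. For small `ε` both
`θ₁, θ₂` stay above `c = a / (2√b)` and `|θ₁ - θ₂| < 2 C_y ε³`, so the required change of `Q` is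
`O(n |θ₁ - θ₂|)`, and the intermediate value theorem gives a root `t` of size `O(|θ₁ - θ₂|)`.
-/

open Real

/-- `θ^ε = (a − ε²L)/√(b − 2ε²La)`. -/
noncomputable def thetaEps (L a b ε : ℝ) : ℝ :=
  (a - ε ^ 2 * L) / Real.sqrt (b - 2 * ε ^ 2 * L * a)

lemma rhoR_eq_of_ne_zero {n : ℕ} {L : ℝ} (r : ℝ) (hL : 0 < L) {y : Fin n → ℝ}
    (hy : ∀ i, y i ≠ 0) :
    rhoR L r y = (∑ i, (|y i| - r * L)) / (√n * √(∑ i, (|y i| - r * L) ^ 2)) := by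
  have hsign : ∀ i, Real.sign (y i) * y i = |y i| ∧ Real.sign (y i) ^ 2 = 1 := fun i => by
    rcases (hy i).lt_or_gt with h | h
    · rw [Real.sign_of_neg h, abs_of_neg h]; constructor <;> ring
    · rw [Real.sign_of_pos h, abs_of_pos h]; constructor <;> ring
  have hdot : dotp (xr L r y) (Zv L y) = (∑ i, (|y i| - r * L)) * L := by
    rw [dotp, Finset.sum_mul]
    refine Finset.sum_congr rfl fun i _ => ?_
    obtain ⟨h₁, h₂⟩ := hsign i
    simp only [xr, Zv]
    linear_combination L * h₁ - r * L ^ 2 * h₂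
  have hxr : nrm (xr L r y) = √(∑ i, (|y i| - r * L) ^ 2) := by
    refine congrArg Real.sqrt (Finset.sum_congr rfl fun i _ => ?_)
    obtain ⟨h₁, h₂⟩ := hsign i
    simp only [xr]
    linear_combination (-2 * r * L) * h₁ + r ^ 2 * L ^ 2 * h₂ - sq_abs (y i)
  have hZ : nrm (Zv L y) = √n * L := by
    have : ∀ i, (Zv L y i) ^ 2 = L ^ 2 := fun i => by
      simp only [Zv]; linear_combination L ^ 2 * (hsign i).2
    rw [nrm, Finset.sum_congr rfl fun i _ => this i, Finset.sum_const, Finset.card_univ,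
      Fintype.card_fin, nsmul_eq_mul, Real.sqrt_mul (Nat.cast_nonneg n), Real.sqrt_sq hL.le]
  rw [rhoR, hdot, hxr, hZ, ← mul_assoc, mul_div_mul_right _ _ hL.ne', mul_comm (√_)]

lemma div_sqrt_mul_sqrt_eq_iff {S n Q θ : ℝ} (hS : 0 < S) (hn : 0 < n) (hθ : 0 < θ)
    (hQ : 0 ≤ Q) : S / (√n * √Q) = θ ↔ Q = S ^ 2 / (n * θ ^ 2) := by
  rcases hQ.eq_or_lt with rfl | hQ
  · simp only [Real.sqrt_zero, mul_zero, div_zero]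
    exact ⟨fun h => absurd h hθ.ne, fun h => absurd h.symm (by positivity)⟩
  rw [div_eq_iff (by positivity), eq_div_iff (by positivity)]
  have hsq : (θ * (√n * √Q)) ^ 2 = Q * (n * θ ^ 2) := by
    rw [mul_pow, mul_pow, Real.sq_sqrt hn.le, Real.sq_sqrt hQ.le]; ring
  rw [← hsq]
  exact ⟨fun h => by rw [h], fun h => (pow_left_inj₀ hS.le (by positivity) two_ne_zero).mp h.symm⟩

lemma sum_sq_eq_of_rhoR_eq {n : ℕ} {L r θ : ℝ} (hL : 0 < L) {y : Fin n → ℝ}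
    (hy : ∀ i, y i ≠ 0) (hθ : 0 < θ) (hρ : rhoR L r y = θ) :
    0 < (n : ℝ) ∧ 0 < ∑ i, (|y i| - r * L) ∧
      ∑ i, (|y i| - r * L) ^ 2 = (∑ i, (|y i| - r * L)) ^ 2 / (n * θ ^ 2) := by
  rw [rhoR_eq_of_ne_zero r hL hy] at hρ
  have hn : 0 < (n : ℝ) := Nat.cast_pos.mpr <| Nat.pos_of_ne_zero fun h => by
    rw [show (n : ℝ) = 0 by exact_mod_cast h, Real.sqrt_zero, zero_mul, div_zero] at hρ
    linarith
  have hS : 0 < ∑ i, (|y i| - r * L) := by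
    rcases div_pos_iff.mp (hρ ▸ hθ) with h | h
    · exact h.1
    · exact absurd h.2 (not_lt.mpr (by positivity))
  exact ⟨hn, hS, (div_sqrt_mul_sqrt_eq_iff hS hn hθ (by positivity)).mp hρ⟩

lemma abs_inv_sq_sub_inv_sq_le {c x y : ℝ} (hc : 0 < c) (hx : c ≤ x) (hy : c ≤ y) :
    |(x ^ 2)⁻¹ - (y ^ 2)⁻¹| ≤ 2 / c ^ 3 * |x - y| := by
  have hx0 : 0 < x := hc.trans_le hx
  have hy0 : 0 < y := hc.trans_le hy
  have key : (x ^ 2)⁻¹ - (y ^ 2)⁻¹ = (y - x) * ((x * y ^ 2)⁻¹ + (x ^ 2 * y)⁻¹) := by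
    field_simp; ring
  have h₁ : (x * y ^ 2)⁻¹ ≤ (c ^ 3)⁻¹ :=
    inv_anti₀ (by positivity) (by rw [pow_succ']; gcongr)
  have h₂ : (x ^ 2 * y)⁻¹ ≤ (c ^ 3)⁻¹ :=
    inv_anti₀ (by positivity) (by rw [pow_succ]; gcongr)
  rw [key, abs_mul, abs_sub_comm, abs_of_pos (a := (x * y ^ 2)⁻¹ + (x ^ 2 * y)⁻¹) (by positivity),
    mul_comm, div_eq_mul_inv]
  gcongr
  linarith

lemma exists_quadratic_eq {Q D p τ N : ℝ} (hτ : 0 < τ) (hp : 0 ≤ p)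
    (hN : |N - Q| ≤ τ * (2 * D - p * τ)) :
    ∃ t, |t| ≤ τ ∧ Q + 2 * D * t + p * t ^ 2 = N ∧ |t| * (2 * D - p * τ) ≤ |N - Q| := by
  have hmem : N ∈ Set.Icc (Q + 2 * D * -τ + p * (-τ) ^ 2) (Q + 2 * D * τ + p * τ ^ 2) :=
    ⟨by nlinarith [neg_abs_le (N - Q)], by nlinarith [le_abs_self (N - Q)]⟩
  obtain ⟨t, ⟨hlo, hhi⟩, ht⟩ := intermediate_value_Icc (neg_le_self hτ.le)
    (f := fun t => Q + 2 * D * t + p * t ^ 2) (by fun_prop) hmem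
  refine ⟨t, abs_le.mpr ⟨hlo, hhi⟩, ht, ?_⟩
  rw [← ht, show Q + 2 * D * t + p * t ^ 2 - Q = t * (2 * D + p * t) by ring, abs_mul]
  gcongr
  exact (by nlinarith : 2 * D - p * τ ≤ 2 * D + p * t).trans (le_abs_self _)

/-- With `τ = A / 10` in `exists_quadratic_eq`, the margin `τ (2D - 2mτ) ≥ mA² / 50` absorbs the
required change `|S²/(nθ₂²) - S²/(nθ₁²)| ≤ 2nA² |θ₁ - θ₂| / c³` once `|θ₁ - θ₂| ≤ C₀ c³ / 100`. -/
lemma exists_transfer_step {n m S Q D A C₀ c θ₁ θ₂ : ℝ} (hA : 0 < A) (hC₀ : 0 < C₀)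
    (hc : 0 < c) (hθ₁ : c ≤ θ₁) (hθ₂ : c ≤ θ₂) (hθ : |θ₁ - θ₂| ≤ C₀ * c ^ 3 / 100)
    (hn : 0 < n) (hm : C₀ * n ≤ m) (hS : 0 ≤ S) (hSn : S ≤ n * A)
    (hQ : Q = S ^ 2 / (n * θ₁ ^ 2)) (hD : m * (A / 5) ≤ D) :
    ∃ t, |t| ≤ A / 10 ∧ Q + 2 * D * t + 2 * m * t ^ 2 = S ^ 2 / (n * θ₂ ^ 2) ∧
      |t| ≤ 10 * A / (C₀ * c ^ 3) * |θ₁ - θ₂| := by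
  have hgap : |S ^ 2 / (n * θ₂ ^ 2) - Q| ≤ n * A ^ 2 * (2 / c ^ 3 * |θ₁ - θ₂|) := by
    have hSn' : S ^ 2 / n ≤ n * A ^ 2 := by
      rw [div_le_iff₀ hn]; nlinarith
    have hsplit : ∀ θ : ℝ, S ^ 2 / (n * θ ^ 2) = S ^ 2 / n * (θ ^ 2)⁻¹ := fun θ => by
      rw [div_mul_eq_div_div, div_eq_mul_inv]
    rw [hQ, hsplit, hsplit, ← mul_sub, abs_mul, abs_of_nonneg (by positivity), abs_sub_comm θ₁]
    exact mul_le_mul hSn' (abs_inv_sq_sub_inv_sq_le hc hθ₂ hθ₁) (abs_nonneg _) (by positivity)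
  have hgap' : n * A ^ 2 * (2 / c ^ 3 * |θ₁ - θ₂|) ≤ m * A ^ 2 / 50 := by
    calc n * A ^ 2 * (2 / c ^ 3 * |θ₁ - θ₂|)
        ≤ n * A ^ 2 * (2 / c ^ 3 * (C₀ * c ^ 3 / 100)) := by gcongr
      _ = C₀ * n * A ^ 2 / 50 := by field_simp; ring
      _ ≤ m * A ^ 2 / 50 := by gcongr
  have hm₀ : 0 < m := (mul_pos hC₀ hn).trans_le hm
  have hmargin : C₀ * n * A / 5 ≤ 2 * D - 2 * m * (A / 10) := by nlinarith
  obtain ⟨t, ht, htQ, htK⟩ := exists_quadratic_eq (Q := Q) (D := D) (p := 2 * m)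
    (τ := A / 10) (N := S ^ 2 / (n * θ₂ ^ 2)) (by positivity) (by positivity)
    (by nlinarith [mul_le_mul_of_nonneg_left hD hA.le])
  refine ⟨t, ht, htQ, ?_⟩
  have hpos : 0 < C₀ * n * A / 5 := by positivity
  calc |t| = |t| * (C₀ * n * A / 5) / (C₀ * n * A / 5) := by field_simp
    _ ≤ n * A ^ 2 * (2 / c ^ 3 * |θ₁ - θ₂|) / (C₀ * n * A / 5) := by
        refine div_le_div_of_nonneg_right ?_ hpos.le
        exact (mul_le_mul_of_nonneg_left hmargin (abs_nonneg t)).trans (htK.trans hgap)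
    _ = 10 * A / (C₀ * c ^ 3) * |θ₁ - θ₂| := by field_simp; ring

lemma sum_add_mul_sq {ι : Type*} [Fintype ι] (f g : ι → ℝ) (t : ℝ) :
    ∑ i, (f i + t * g i) ^ 2 = ∑ i, f i ^ 2 + 2 * t * ∑ i, f i * g i + t ^ 2 * ∑ i, g i ^ 2 := by
  simp only [Finset.mul_sum, ← Finset.sum_add_distrib]
  exact Finset.sum_congr rfl fun i _ => by ring

lemma card_mul_le_sum_sub_sum {ι : Type*} {P Q : Finset ι} (hcard : P.card = Q.card)
    {f : ι → ℝ} {α β : ℝ} (hP : ∀ i ∈ P, α ≤ f i) (hQ : ∀ i ∈ Q, f i ≤ β) :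
    P.card * (α - β) ≤ ∑ i ∈ P, f i - ∑ i ∈ Q, f i := by
  have hPsum := Finset.card_nsmul_le_sum P f α hP
  have hQsum := Finset.sum_le_card_nsmul Q f β hQ
  rw [nsmul_eq_mul] at hPsum hQsum
  rw [← hcard] at hQsum
  linarith

lemma exists_disjoint_card_eq_of_le_ncard {ι : Type*} [Fintype ι] {κ : ℝ}
    (y : ι → ℝ) {U V : Set ℝ} (hUV : Disjoint U V) (hU : κ ≤ ({i | y i ∈ U}.ncard : ℝ))
    (hV : κ ≤ ({i | y i ∈ V}.ncard : ℝ)) :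
    ∃ P Q : Finset ι, Disjoint P Q ∧ P.card = Q.card ∧ κ ≤ P.card ∧
      (∀ i ∈ P, y i ∈ U) ∧ ∀ i ∈ Q, y i ∈ V := by
  classical
  have hncard : ∀ W : Set ℝ, {i | y i ∈ W}.ncard = (Finset.univ.filter (y · ∈ W)).card :=
    fun W => by rw [← Set.ncard_coe_finset]; congr; ext; simp
  rw [hncard] at hU hV
  obtain ⟨P, hP, hPcard⟩ := Finset.exists_subset_card_eq
    (min_le_left (Finset.univ.filter (y · ∈ U)).card (Finset.univ.filter (y · ∈ V)).card)
  obtain ⟨Q, hQ, hQcard⟩ := Finset.exists_subset_card_eq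
    (min_le_right (Finset.univ.filter (y · ∈ U)).card (Finset.univ.filter (y · ∈ V)).card)
  have hPU : ∀ i ∈ P, y i ∈ U := fun i hi => (Finset.mem_filter.mp (hP hi)).2
  have hQV : ∀ i ∈ Q, y i ∈ V := fun i hi => (Finset.mem_filter.mp (hQ hi)).2
  refine ⟨P, Q, Finset.disjoint_left.mpr fun i hiP hiQ =>
      Set.disjoint_left.mp hUV (hPU i hiP) (hQV i hiQ), hPcard.trans hQcard.symm, ?_, hPU, hQV⟩
  rw [hPcard, Nat.cast_min]
  exact le_min hU hV

section Transfer

variable {ι : Type*} [DecidableEq ι] (P Q : Finset ι)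

def transferVec (i : ι) : ℝ := (if i ∈ P then 1 else 0) - (if i ∈ Q then 1 else 0)

variable {P Q}

lemma transferVec_of_mem_left (hPQ : Disjoint P Q) {i : ι} (hi : i ∈ P) :
    transferVec P Q i = 1 := by
  simp [transferVec, hi, Finset.disjoint_left.mp hPQ hi]

lemma transferVec_of_mem_right (hPQ : Disjoint P Q) {i : ι} (hi : i ∈ Q) :
    transferVec P Q i = -1 := by
  simp [transferVec, hi, Finset.disjoint_right.mp hPQ hi]

lemma transferVec_of_notMem {i : ι} (hP : i ∉ P) (hQ : i ∉ Q) : transferVec P Q i = 0 := by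
  simp [transferVec, hP, hQ]

variable [Fintype ι]

lemma sum_mul_transferVec (f : ι → ℝ) :
    ∑ i, f i * transferVec P Q i = ∑ i ∈ P, f i - ∑ i ∈ Q, f i := by
  simp [transferVec, mul_sub, Finset.sum_sub_distrib]

lemma sum_transferVec (h : P.card = Q.card) : ∑ i, transferVec P Q i = 0 := by
  simpa [h] using sum_mul_transferVec (P := P) (Q := Q) 1

lemma sum_transferVec_sq (hPQ : Disjoint P Q) :
    ∑ i, transferVec P Q i ^ 2 = P.card + Q.card := by
  simp_rw [sq, sum_mul_transferVec]
  rw [Finset.sum_congr rfl fun i hi => transferVec_of_mem_left hPQ hi,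
    Finset.sum_congr rfl fun i hi => transferVec_of_mem_right hPQ hi]
  simp

end Transfer

section TransferStep

variable {ι : Type*} [DecidableEq ι] {P Q : Finset ι} {y : ι → ℝ} {t : ℝ}

lemma pos_add_mul_transferVec (hPQ : Disjoint P Q) (hy : ∀ i ∈ P ∪ Q, |t| < y i) {i : ι}
    (hi : i ∈ P ∪ Q) : 0 < y i + t * transferVec P Q i := by
  have := hy i hi
  rcases Finset.mem_union.mp hi with hi | hi
  · rw [transferVec_of_mem_left hPQ hi]; linarith [neg_abs_le t]
  · rw [transferVec_of_mem_right hPQ hi]; linarith [le_abs_self t]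

lemma abs_add_mul_transferVec (hPQ : Disjoint P Q) (hy : ∀ i ∈ P ∪ Q, |t| < y i) (i : ι) :
    |y i + t * transferVec P Q i| = |y i| + t * transferVec P Q i := by
  by_cases hi : i ∈ P ∪ Q
  · rw [abs_of_pos (pos_add_mul_transferVec hPQ hy hi),
      abs_of_pos ((abs_nonneg t).trans_lt (hy i hi))]
  · rw [Finset.mem_union, not_or] at hi
    simp [transferVec_of_notMem hi.1 hi.2]

lemma sign_add_mul_transferVec (hPQ : Disjoint P Q) (hy : ∀ i ∈ P ∪ Q, |t| < y i) (i : ι) :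
    Real.sign (y i + t * transferVec P Q i) = Real.sign (y i) := by
  by_cases hi : i ∈ P ∪ Q
  · rw [Real.sign_of_pos (pos_add_mul_transferVec hPQ hy hi),
      Real.sign_of_pos ((abs_nonneg t).trans_lt (hy i hi))]
  · rw [Finset.mem_union, not_or] at hi
    simp [transferVec_of_notMem hi.1 hi.2]

lemma abs_add_mul_transferVec_le (hPQ : Disjoint P Q) (hy : ∀ i ∈ P ∪ Q, |t| < y i) {A : ℝ}
    (hyA : ∀ i, |y i| ≤ A) (hPQA : ∀ i ∈ P ∪ Q, y i + |t| ≤ A) (i : ι) :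
    |y i + t * transferVec P Q i| ≤ A := by
  rw [abs_add_mul_transferVec hPQ hy]
  by_cases hiP : i ∈ P
  · rw [transferVec_of_mem_left hPQ hiP,
      abs_of_pos ((abs_nonneg t).trans_lt (hy i (Finset.mem_union_left Q hiP)))]
    linarith [hPQA i (Finset.mem_union_left Q hiP), le_abs_self t]
  by_cases hiQ : i ∈ Q
  · rw [transferVec_of_mem_right hPQ hiQ]
    linarith [hPQA i (Finset.mem_union_right P hiQ), abs_of_pos ((abs_nonneg t).trans_lt
      (hy i (Finset.mem_union_right P hiQ))), neg_abs_le t]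
  rw [transferVec_of_notMem hiP hiQ, mul_zero, add_zero]
  exact hyA i

variable [Fintype ι]

lemma sum_abs_add_mul_transferVec (hPQ : Disjoint P Q) (hcard : P.card = Q.card)
    (hy : ∀ i ∈ P ∪ Q, |t| < y i) :
    ∑ i, |y i + t * transferVec P Q i| = ∑ i, |y i| := by
  simp_rw [abs_add_mul_transferVec hPQ hy, Finset.sum_add_distrib, ← Finset.mul_sum,
    sum_transferVec hcard, mul_zero, add_zero]

end TransferStep

lemma rhoR_add_mul_transferVec {n : ℕ} {L : ℝ} (r : ℝ) (hL : 0 < L) {P Q : Finset (Fin n)}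
    (hPQ : Disjoint P Q) (hcard : P.card = Q.card) {y : Fin n → ℝ} (hy₀ : ∀ i, y i ≠ 0)
    {t : ℝ} (hy : ∀ i ∈ P ∪ Q, |t| < y i) :
    rhoR L r (fun i => y i + t * transferVec P Q i) =
      (∑ i, (|y i| - r * L)) / (√n * √(∑ i, (|y i| - r * L) ^ 2 +
        2 * t * (∑ i ∈ P, |y i| - ∑ i ∈ Q, |y i|) + t ^ 2 * (P.card + Q.card))) := by
  have hy₂ : ∀ i, y i + t * transferVec P Q i ≠ 0 := fun i h => hy₀ i <| by
    rw [← Real.sign_eq_zero_iff, ← sign_add_mul_transferVec hPQ hy i, h, Real.sign_zero]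
  have hshift : ∀ i, |y i + t * transferVec P Q i| - r * L =
      (|y i| - r * L) + t * transferVec P Q i := fun i => by
    rw [abs_add_mul_transferVec hPQ hy]; ring
  simp_rw [rhoR_eq_of_ne_zero r hL hy₂, hshift, sum_add_mul_sq, sum_transferVec_sq hPQ,
    Finset.sum_add_distrib, ← Finset.mul_sum, sum_transferVec hcard, sum_mul_transferVec]
  congr 4
  · ring
  · rw [Finset.sum_sub_distrib, Finset.sum_sub_distrib, Finset.sum_const, Finset.sum_const, hcard]
    ring

lemma nrm_mul_transferVec_le {n : ℕ} {P Q : Finset (Fin n)} (hPQ : Disjoint P Q)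
    (hcard : P.card = Q.card) (t : ℝ) :
    nrm (fun i => t * transferVec P Q i) ≤ 2 * √n * |t| := by
  have hPn : (P.card : ℝ) ≤ n := by
    exact_mod_cast (Finset.card_le_univ P).trans_eq (Fintype.card_fin n)
  have hsqrt : √(P.card + Q.card : ℝ) ≤ 2 * √n := by
    rw [← hcard, show (2 : ℝ) * √n = √(2 ^ 2 * n) by
      rw [Real.sqrt_mul (by norm_num), Real.sqrt_sq (by norm_num)]]
    exact Real.sqrt_le_sqrt (by linarith)
  simp_rw [nrm, mul_pow, ← Finset.mul_sum, sum_transferVec_sq hPQ]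
  rw [Real.sqrt_mul (sq_nonneg t), Real.sqrt_sq_eq_abs, mul_comm]
  gcongr

theorem exists_rhoR_eq_of_abs_sub_le {n : ℕ} {A L r C₀ c θ₁ θ₂ : ℝ} (hA : 0 < A) (hL : 0 < L)
    (hr : 0 ≤ r) (hC₀ : 0 < C₀) (hc : 0 < c) (hθ₁ : c ≤ θ₁) (hθ₂ : c ≤ θ₂)
    (hθ : |θ₁ - θ₂| ≤ C₀ * c ^ 3 / 100) (y₁ : Fin n → ℝ) (hy₁A : ∀ i, |y₁ i| ≤ A)
    (hy₁₀ : ∀ i, y₁ i ≠ 0) (hρ : rhoR L r y₁ = θ₁)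
    (h₃ : C₀ * n ≤ (Set.ncard {i : Fin n | y₁ i ∈ Set.Ioo (A / 5) (2 * A / 5)} : ℝ))
    (h₄ : C₀ * n ≤ (Set.ncard {i : Fin n | y₁ i ∈ Set.Ioo (3 * A / 5) (4 * A / 5)} : ℝ)) :
    ∃ y₂ : Fin n → ℝ, (∀ i, |y₂ i| ≤ A) ∧
      rhoR L r y₂ = θ₂ ∧
      (∀ i, Real.sign (y₂ i) = Real.sign (y₁ i)) ∧
      (∑ i, |y₂ i|) = (∑ i, |y₁ i|) ∧
      nrm (fun i => y₂ i - y₁ i) / Real.sqrt n ≤ 20 * A / (C₀ * c ^ 3) * |θ₁ - θ₂| ∧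
      (∀ i, y₁ i ∈ Set.Ioo (-(A / 10)) (A / 10) → y₂ i = y₁ i) := by
  obtain ⟨P, Q, hPQ, hcard, hm, hP, hQ⟩ := exists_disjoint_card_eq_of_le_ncard y₁
    (Set.disjoint_left.mpr fun x h₄ h₃ => by linarith [h₄.1, h₃.2]) h₄ h₃
  obtain ⟨hn, hS, hQ₁⟩ := sum_sq_eq_of_rhoR_eq hL hy₁₀ (hc.trans_le hθ₁) hρ
  set S := ∑ i, (|y₁ i| - r * L)
  have hSn : S ≤ n * A := by
    refine (Finset.sum_le_card_nsmul Finset.univ _ A fun i _ => ?_).trans_eq (by simp)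
    linarith [hy₁A i, mul_nonneg hr hL.le]
  have hD : P.card * (3 * A / 5 - 2 * A / 5) ≤ ∑ i ∈ P, |y₁ i| - ∑ i ∈ Q, |y₁ i| :=
    card_mul_le_sum_sub_sum hcard (fun i hi => (hP i hi).1.le.trans (le_abs_self _))
      fun i hi => by rw [abs_of_pos (by linarith [(hQ i hi).1])]; exact (hQ i hi).2.le
  rw [show 3 * A / 5 - 2 * A / 5 = A / 5 by ring] at hD
  obtain ⟨t, ht, htQ, htK⟩ := exists_transfer_step hA hC₀ hc hθ₁ hθ₂ hθ hn hm hS.le hSn hQ₁ hD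
  have hPQmem : ∀ i ∈ P ∪ Q, y₁ i ∈ Set.Ioo (A / 5) (4 * A / 5) := fun i hi => by
    rcases Finset.mem_union.mp hi with hi | hi
    · exact ⟨by linarith [(hP i hi).1], (hP i hi).2⟩
    · exact ⟨(hQ i hi).1, by linarith [(hQ i hi).2]⟩
  have hmove : ∀ i ∈ P ∪ Q, |t| < y₁ i := fun i hi => by linarith [(hPQmem i hi).1]
  have hroom : ∀ i ∈ P ∪ Q, y₁ i + |t| ≤ A := fun i hi => by linarith [(hPQmem i hi).2]
  refine ⟨fun i => y₁ i + t * transferVec P Q i,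
    abs_add_mul_transferVec_le hPQ hmove hy₁A hroom, ?_,
    sign_add_mul_transferVec hPQ hmove, sum_abs_add_mul_transferVec hPQ hcard hmove, ?_,
    fun i hi => ?_⟩
  · have hN : ∑ i, (|y₁ i| - r * L) ^ 2 + 2 * t * (∑ i ∈ P, |y₁ i| - ∑ i ∈ Q, |y₁ i|) +
        t ^ 2 * (P.card + P.card) = S ^ 2 / (n * θ₂ ^ 2) := by
      rw [← htQ]; ring
    rw [rhoR_add_mul_transferVec r hL hPQ hcard hy₁₀ hmove, ← hcard, hN,
      div_sqrt_mul_sqrt_eq_iff hS hn (hc.trans_le hθ₂) (by positivity)]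
  · simp only [add_sub_cancel_left]
    rw [div_le_iff₀ (Real.sqrt_pos.mpr hn)]
    calc nrm (fun i => t * transferVec P Q i) ≤ 2 * √n * |t| := nrm_mul_transferVec_le hPQ hcard t
      _ ≤ 2 * √n * (10 * A / (C₀ * c ^ 3) * |θ₁ - θ₂|) := by gcongr
      _ = 20 * A / (C₀ * c ^ 3) * |θ₁ - θ₂| * √n := by ring
  · have hiPQ : i ∉ P ∪ Q := fun h => by linarith [(hPQmem i h).1, hi.2]
    rw [Finset.mem_union, not_or] at hiPQ
    simp [transferVec_of_notMem hiPQ.1 hiPQ.2]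

open Filter Topology in
lemma exists_thetaEps_window {L a b Cy c δ : ℝ} (hb : 0 < b) (hc : c < a / √b) (hδ : 0 < δ) :
    ∃ ε₀ > 0, ∀ ε, 0 < ε → ε < ε₀ → c < thetaEps L a b ε - Cy * ε ^ 3 ∧ 2 * Cy * ε ^ 3 < δ := by
  have hθ : ContinuousAt (fun ε => thetaEps L a b ε - Cy * ε ^ 3) 0 := by
    unfold thetaEps
    exact ((by fun_prop : Continuous fun ε : ℝ => a - ε ^ 2 * L).continuousAt.div
      (by fun_prop) (by simpa using (Real.sqrt_pos.mpr hb).ne')).sub (by fun_prop)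
  have hlow : ∀ᶠ ε in 𝓝 0, c < thetaEps L a b ε - Cy * ε ^ 3 :=
    hθ.eventually (lt_mem_nhds (by simpa [thetaEps] using hc))
  have hgap : ∀ᶠ ε in 𝓝 (0 : ℝ), 2 * Cy * ε ^ 3 < δ :=
    (by fun_prop : Continuous fun ε : ℝ => 2 * Cy * ε ^ 3).continuousAt.eventually
      (gt_mem_nhds (by simpa using hδ))
  obtain ⟨ε₀, hε₀, h⟩ := Metric.eventually_nhds_iff.mp (hlow.and hgap)
  exact ⟨ε₀, hε₀, fun ε hε hεε₀ => h (by rwa [Real.dist_0_eq_abs, abs_of_pos hε])⟩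

theorem stmt16_general (A L C₀ Cy a b : ℝ) (hA : 0 < A) (hL : 0 < L) (hC₀ : 0 < C₀)
    (ha : 0 < a) (hb : 0 < b) :
    ∃ ε₀ Chat : ℝ, 0 < ε₀ ∧ 0 < Chat ∧
      ∀ ε : ℝ, 0 < ε → ε < ε₀ →
        ∀ (n : ℕ) (θ₁ θ₂ : ℝ),
          θ₁ ∈ Set.Ioo (thetaEps L a b ε - Cy * ε ^ 3) (thetaEps L a b ε + Cy * ε ^ 3) →
          θ₂ ∈ Set.Ioo (thetaEps L a b ε - Cy * ε ^ 3) (thetaEps L a b ε + Cy * ε ^ 3) →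
          ∀ y₁ : Fin n → ℝ,
            (∀ i, |y₁ i| ≤ A) →
            (∀ i, y₁ i ∉ Set.Ioo (-(L * ε ^ 2)) (L * ε ^ 2)) →
            rhoR L (ε ^ 2) y₁ = θ₁ →
            C₀ * n ≤ (Set.ncard {i : Fin n |
              y₁ i ∈ Set.Ioo (-(4 * A / 5)) (-(3 * A / 5))} : ℝ) →
            C₀ * n ≤ (Set.ncard {i : Fin n |
              y₁ i ∈ Set.Ioo (-(2 * A / 5)) (-(A / 5))} : ℝ) →
            C₀ * n ≤ (Set.ncard {i : Fin n |
              y₁ i ∈ Set.Ioo (A / 5) (2 * A / 5)} : ℝ) →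
            C₀ * n ≤ (Set.ncard {i : Fin n |
              y₁ i ∈ Set.Ioo (3 * A / 5) (4 * A / 5)} : ℝ) →
            ∃ y₂ : Fin n → ℝ, (∀ i, |y₂ i| ≤ A) ∧
              rhoR L (ε ^ 2) y₂ = θ₂ ∧
              (∀ i, Real.sign (y₂ i) = Real.sign (y₁ i)) ∧
              (∑ i, |y₂ i|) = (∑ i, |y₁ i|) ∧
              nrm (fun i => y₂ i - y₁ i) / Real.sqrt n ≤ Chat * |θ₁ - θ₂| ∧
              (∀ i, y₁ i ∈ Set.Ioo (-(A / 10)) (A / 10) → y₂ i = y₁ i) := by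
  set c := a / (2 * √b)
  have hc : 0 < c := by positivity
  have hsqrt : 0 < √b := Real.sqrt_pos.mpr hb
  obtain ⟨ε₀, hε₀, hwindow⟩ := exists_thetaEps_window (L := L) (Cy := Cy) (c := c) hb
    (div_lt_div_of_pos_left ha hsqrt (by linarith)) (show 0 < C₀ * c ^ 3 / 100 by positivity)
  refine ⟨ε₀, 20 * A / (C₀ * c ^ 3), hε₀, by positivity, ?_⟩
  intro ε hε hεε₀ n θ₁ θ₂ hθ₁ hθ₂ y₁ hy₁A hy₁L hρ _ _ h₃ h₄
  obtain ⟨hlow, hgap⟩ := hwindow ε hε hεε₀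
  have hy₁₀ : ∀ i, y₁ i ≠ 0 := fun i h => hy₁L i <| by
    rw [h]; exact ⟨neg_lt_zero.mpr (by positivity), by positivity⟩
  have hθ : |θ₁ - θ₂| ≤ C₀ * c ^ 3 / 100 :=
    abs_sub_le_iff.mpr ⟨by linarith [hθ₁.2, hθ₂.1], by linarith [hθ₁.1, hθ₂.2]⟩
  exact exists_rhoR_eq_of_abs_sub_le hA hL (sq_nonneg ε) hC₀ hc (by linarith [hθ₁.1])
    (by linarith [hθ₂.1]) hθ y₁ hy₁A hy₁₀ hρ h₃ h₄

/-- given `y₁` with prescribed correlation `ρ_{ε²}(y₁) = θ₁` and enough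
entries in each of the four reference intervals, one can modify it into `y₂` realizing any
nearby correlation `θ₂` while keeping signs, the `ℓ₁` norm, the small entries, and moving
by at most `Ĉ_y |θ₁ − θ₂|` in normalized `ℓ₂` distance. -/
theorem stmt16 (A L C₀ Cy a b : ℝ) (hA : 0 < A) (hL : 0 < L) (hC₀ : 0 < C₀) (hC₀' : C₀ < 1)
    (hCy : 0 < Cy) (ha : 0 < a) (hb : 0 < b) (hab : a ^ 2 < b) :
    ∃ ε₀ Chat : ℝ, 0 < ε₀ ∧ 0 < Chat ∧
      ∀ ε : ℝ, 0 < ε → ε < ε₀ →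
        ∀ (n : ℕ) (θ₁ θ₂ : ℝ),
          θ₁ ∈ Set.Ioo (thetaEps L a b ε - Cy * ε ^ 3) (thetaEps L a b ε + Cy * ε ^ 3) →
          θ₂ ∈ Set.Ioo (thetaEps L a b ε - Cy * ε ^ 3) (thetaEps L a b ε + Cy * ε ^ 3) →
          ∀ y₁ : Fin n → ℝ,
            (∀ i, |y₁ i| ≤ A) →
            (∀ i, y₁ i ∉ Set.Ioo (-(L * ε ^ 2)) (L * ε ^ 2)) →
            rhoR L (ε ^ 2) y₁ = θ₁ →
            C₀ * n ≤ (Set.ncard {i : Fin n |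
              y₁ i ∈ Set.Ioo (-(4 * A / 5)) (-(3 * A / 5))} : ℝ) →
            C₀ * n ≤ (Set.ncard {i : Fin n |
              y₁ i ∈ Set.Ioo (-(2 * A / 5)) (-(A / 5))} : ℝ) →
            C₀ * n ≤ (Set.ncard {i : Fin n |
              y₁ i ∈ Set.Ioo (A / 5) (2 * A / 5)} : ℝ) →
            C₀ * n ≤ (Set.ncard {i : Fin n |
              y₁ i ∈ Set.Ioo (3 * A / 5) (4 * A / 5)} : ℝ) →
            ∃ y₂ : Fin n → ℝ, (∀ i, |y₂ i| ≤ A) ∧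
              rhoR L (ε ^ 2) y₂ = θ₂ ∧
              (∀ i, Real.sign (y₂ i) = Real.sign (y₁ i)) ∧
              (∑ i, |y₂ i|) = (∑ i, |y₁ i|) ∧
              nrm (fun i => y₂ i - y₁ i) / Real.sqrt n ≤ Chat * |θ₁ - θ₂| ∧
              (∀ i, y₁ i ∈ Set.Ioo (-(A / 10)) (A / 10) → y₂ i = y₁ i) :=
  stmt16_general A L C₀ Cy a b hA hL hC₀ ha hb
end

section
/- Let c, d ∈ ℝ^m be distinct vectors and b > 0 with ‖c − d‖ ≥ √b. Consider the convex problem min_{e ∈ ℝ^m} ‖c + e‖² subject to ‖e + d‖² ≤ b. Its optimal value is m* = (‖c − d‖ − √b)², attained at the unique minimizer e* = (−c − λ*·d)/(1 + λ*) with λ* = ‖d − c‖/√b − 1. Moreover, for every feasible e (i.e. ‖e + d‖² ≤ b): ‖c + e‖² ≥ m* + ‖e − e*‖². -/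
/-!
The problem is the metric projection of `p = -c` onto the closed ball of radius `√b` about
`q = -d`, and `e*` is the point `q + (√b / ‖p - q‖) • (p - q)` where the segment from `q` to `p`
leaves the ball. Writing `p - x = (p - e*) + (e* - x)`, for `x` in the ball the cross term
`⟪p - e*, e* - x⟫` is a nonnegative multiple of `√b ‖p - q‖ - ⟪p - q, x - q⟫`, which is
nonnegative by Cauchy–Schwarz; this gives `‖p - x‖² ≥ ‖p - e*‖² + ‖x - e*‖²`, hence optimality
and uniqueness.
-/

open Real

/-- The Lagrange multiplier `λ* = ‖d − c‖/√b − 1`. -/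
noncomputable def lamStar {m : ℕ} (c d : Fin m → ℝ) (b : ℝ) : ℝ :=
  nrm (fun i => d i - c i) / Real.sqrt b - 1

/-- The minimizer `e* = (−c − λ* d)/(1 + λ*)`. -/
noncomputable def eStar {m : ℕ} (c d : Fin m → ℝ) (b : ℝ) : Fin m → ℝ :=
  fun i => (-(c i) - lamStar c d b * d i) / (1 + lamStar c d b)

section ClosedBallProj

variable {E : Type*} [NormedAddCommGroup E] [InnerProductSpace ℝ E]

noncomputable def closedBallProj (q : E) (s : ℝ) (p : E) : E :=
  q + (s / ‖p - q‖) • (p - q)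

variable {p q x : E} {s : ℝ}

lemma closedBallProj_sub_center : closedBallProj q s p - q = (s / ‖p - q‖) • (p - q) :=
  add_sub_cancel_left _ _

lemma sub_closedBallProj : p - closedBallProj q s p = (1 - s / ‖p - q‖) • (p - q) := by
  rw [closedBallProj, sub_smul, one_smul]; abel

lemma norm_closedBallProj_sub_center (hs : 0 ≤ s) (hsp : s ≤ ‖p - q‖) :
    ‖closedBallProj q s p - q‖ = s := by
  rcases (norm_nonneg (p - q)).eq_or_lt with h0 | hpos
  · rw [closedBallProj_sub_center, ← h0]; simp [le_antisymm (h0 ▸ hsp) hs]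
  · rw [closedBallProj_sub_center, norm_smul, Real.norm_of_nonneg (by positivity),
      div_mul_cancel₀ _ hpos.ne']

lemma norm_sub_closedBallProj (hs : 0 ≤ s) (hsp : s ≤ ‖p - q‖) :
    ‖p - closedBallProj q s p‖ = ‖p - q‖ - s := by
  rcases (norm_nonneg (p - q)).eq_or_lt with h0 | hpos
  · rw [sub_closedBallProj, ← h0, norm_eq_zero.1 h0.symm]; simp [le_antisymm (h0 ▸ hsp) hs]
  · rw [sub_closedBallProj, norm_smul, Real.norm_of_nonneg, sub_mul, one_mul,
      div_mul_cancel₀ _ hpos.ne']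
    rw [sub_nonneg]; exact div_le_one_of_le₀ hsp hpos.le

lemma inner_sub_closedBallProj_nonneg (hsp : s ≤ ‖p - q‖) (hx : ‖x - q‖ ≤ s) :
    0 ≤ inner ℝ (p - closedBallProj q s p) (closedBallProj q s p - x) := by
  set r := ‖p - q‖
  have ha : 0 ≤ 1 - s / r := sub_nonneg.2 (div_le_one_of_le₀ hsp (norm_nonneg _))
  have hrr : s / r * r ^ 2 = s * r := by
    rcases (norm_nonneg (p - q)).eq_or_lt with h0 | hpos
    · simp [r, ← h0]
    · field_simp
  have hcs : inner ℝ (p - q) (x - q) ≤ r * s :=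
    (real_inner_le_norm _ _).trans (mul_le_mul_of_nonneg_left hx (norm_nonneg _))
  have hsplit : closedBallProj q s p - x = (s / r) • (p - q) - (x - q) := by
    rw [← closedBallProj_sub_center]; abel
  rw [sub_closedBallProj, hsplit, inner_smul_left, inner_sub_right, real_inner_smul_right,
    real_inner_self_eq_norm_sq, hrr]
  exact mul_nonneg ha (by linarith)

lemma sq_norm_sub_closedBallProj_add_sq_le (hsp : s ≤ ‖p - q‖) (hx : ‖x - q‖ ≤ s) :
    ‖p - closedBallProj q s p‖ ^ 2 + ‖x - closedBallProj q s p‖ ^ 2 ≤ ‖p - x‖ ^ 2 := by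
  have h := inner_sub_closedBallProj_nonneg hsp hx
  have hsplit : p - x = (p - closedBallProj q s p) + (closedBallProj q s p - x) := by abel
  rw [hsplit, norm_add_sq_real, norm_sub_rev x]
  linarith

lemma eq_closedBallProj_of_norm_sub_eq (hsp : s ≤ ‖p - q‖) (hx : ‖x - q‖ ≤ s)
    (hmin : ‖p - x‖ = ‖p - closedBallProj q s p‖) : x = closedBallProj q s p := by
  have h := sq_norm_sub_closedBallProj_add_sq_le hsp hx
  rw [hmin] at h
  exact sub_eq_zero.1 (norm_eq_zero.1 (pow_eq_zero_iff two_ne_zero |>.1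
    (le_antisymm (by linarith) (sq_nonneg _))))

end ClosedBallProj

lemma sum_sq_eq_norm_toLp_sq {ι : Type*} [Fintype ι] (f : ι → ℝ) :
    ∑ i, f i ^ 2 = ‖WithLp.toLp 2 f‖ ^ 2 :=
  (EuclideanSpace.real_norm_sq_eq _).symm

lemma nrm_eq_norm_toLp {k : ℕ} (a : Fin k → ℝ) : nrm a = ‖WithLp.toLp 2 a‖ := by
  rw [EuclideanSpace.norm_eq]; simp only [nrm, Real.norm_eq_abs, sq_abs]

lemma toLp_eStar {m : ℕ} {c d : Fin m → ℝ} {b : ℝ} (hb : 0 < b) (hcd : c ≠ d) :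
    WithLp.toLp 2 (eStar c d b) =
      closedBallProj (-WithLp.toLp 2 d) (√b) (-WithLp.toLp 2 c) := by
  have hr : nrm (fun i => d i - c i) = ‖-WithLp.toLp 2 c - -WithLp.toLp 2 d‖ := by
    rw [neg_sub_neg, nrm_eq_norm_toLp]; rfl
  have hr0 : nrm (fun i => d i - c i) ≠ 0 := by
    rw [hr, norm_ne_zero_iff, sub_ne_zero, Ne, neg_inj, (WithLp.toLp_injective 2).eq_iff]
    exact hcd
  have hs0 : √b ≠ 0 := (Real.sqrt_pos.2 hb).ne'
  ext i
  simp only [eStar, lamStar, closedBallProj, ← hr]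
  simp only [add_sub_cancel, sub_neg_eq_add, smul_add, smul_neg, PiLp.add_apply, PiLp.neg_apply,
    PiLp.smul_apply, smul_eq_mul]
  field_simp
  ring

/-- the constrained least-squares problem
`min ‖c + e‖² s.t. ‖e + d‖² ≤ b` has optimal value `(‖c − d‖ − √b)²`, attained at the
unique minimizer `e*`, with the strong-convexity lower bound
`‖c + e‖² ≥ m* + ‖e − e*‖²` for every feasible `e`. -/
theorem stmt17 (m : ℕ) (c d : Fin m → ℝ) (b : ℝ) (hb : 0 < b) (hcd : c ≠ d)
    (hfar : Real.sqrt b ≤ nrm (fun i => c i - d i)) :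
    (∑ i, (eStar c d b i + d i) ^ 2) ≤ b ∧
    (∑ i, (c i + eStar c d b i) ^ 2) =
      (nrm (fun i => c i - d i) - Real.sqrt b) ^ 2 ∧
    (∀ e : Fin m → ℝ, (∑ i, (e i + d i) ^ 2) ≤ b →
      (nrm (fun i => c i - d i) - Real.sqrt b) ^ 2 + ∑ i, (e i - eStar c d b i) ^ 2 ≤
        ∑ i, (c i + e i) ^ 2) ∧
    (∀ e : Fin m → ℝ, (∑ i, (e i + d i) ^ 2) ≤ b →
      (∑ i, (c i + e i) ^ 2) = (nrm (fun i => c i - d i) - Real.sqrt b) ^ 2 →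
      e = eStar c d b) := by
  have hr : nrm (fun i => c i - d i) = ‖-WithLp.toLp 2 c - -WithLp.toLp 2 d‖ := by
    rw [neg_sub_neg, norm_sub_rev, nrm_eq_norm_toLp]; rfl
  have hsr := hr ▸ hfar
  have hball (e : Fin m → ℝ) :
      ∑ i, (e i + d i) ^ 2 ≤ b ↔ ‖WithLp.toLp 2 e - -WithLp.toLp 2 d‖ ≤ √b := by
    rw [Real.le_sqrt (norm_nonneg _) hb.le, sub_neg_eq_add, sum_sq_eq_norm_toLp_sq]; rfl
  have hobj (e : Fin m → ℝ) :
      ∑ i, (c i + e i) ^ 2 = ‖-WithLp.toLp 2 c - WithLp.toLp 2 e‖ ^ 2 := by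
    rw [← neg_add', norm_neg, sum_sq_eq_norm_toLp_sq]; rfl
  have hgap (e : Fin m → ℝ) :
      ∑ i, (e i - eStar c d b i) ^ 2 = ‖WithLp.toLp 2 e - WithLp.toLp 2 (eStar c d b)‖ ^ 2 :=
    sum_sq_eq_norm_toLp_sq _
  have hproj := toLp_eStar hb hcd
  rw [hr, ← norm_sub_closedBallProj (Real.sqrt_nonneg b) hsr, ← hproj]
  refine ⟨?_, hobj _, fun e he => ?_, fun e he hmin => ?_⟩
  · rw [hball, hproj, norm_closedBallProj_sub_center (Real.sqrt_nonneg b) hsr]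
  · rw [hgap, hobj, hproj]
    exact sq_norm_sub_closedBallProj_add_sq_le hsr ((hball e).1 he)
  · rw [hobj, sq_eq_sq₀ (norm_nonneg _) (norm_nonneg _), hproj] at hmin
    apply WithLp.toLp_injective 2
    rw [hproj]
    exact eq_closedBallProj_of_norm_sub_eq hsr ((hball e).1 he) hmin
end
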